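/- arXiv:1801.10218 — 6 statements merged into one kernel-verified Lean document; each statement's English description precedes it below -/
import Mathlib

section
/- Let (Ω, 𝓕, (𝓕_t)_{t∈[0,∞)}) be a T-space with truncation (T_t) and let τ be a stopping time. Then σ(T_τ) = {A ∈ 𝓕 : T_τ⁻¹(A) = A}; equivalently, a set A ∈ 𝓕 belongs to σ(T_τ) if and only if for every ω ∈ Ω one has ω ∈ A ⟺ ω_{≤τ} ∈ A. -/
open MeasureTheory Set NNReal ENNReal

/-- A T-space (truncated space): a filtered measurable space `(Ω, 𝓕, (𝓕ₜ)_{t ∈ [0,∞)})`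
with `𝓕 = ⋁ₜ 𝓕ₜ`, equipped with a truncation family `(Tₜ)` such that `(t, ω) ↦ Tₜ ω` is
jointly measurable, `Tₜ ∘ Tₛ = T_{s ∧ t}` and `𝓕ₜ = σ(Tₜ)`. -/
structure TSpace (Ω : Type*) [mΩ : MeasurableSpace Ω] where
  filt : ℝ≥0 → MeasurableSpace Ω
  T : ℝ≥0 → Ω → Ω
  iSup_filt : (⨆ t : ℝ≥0, filt t) = mΩ
  meas_T : Measurable fun p : ℝ≥0 × Ω => T p.1 p.2
  T_comp : ∀ (s t : ℝ≥0) (ω : Ω), T t (T s ω) = T (min s t) ω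
  filt_eq : ∀ t : ℝ≥0, filt t = MeasurableSpace.comap (T t) mΩ

namespace TSpace

variable {Ω : Type*} [mΩ : MeasurableSpace Ω]

/-- Truncation indexed by extended times, with the convention `T_∞ = id`. -/
noncomputable def Te (X : TSpace Ω) (t : ℝ≥0∞) (ω : Ω) : Ω :=
  if t = ∞ then ω else X.T t.toNNReal ω

/-- A (raw) stopping time on a T-space: `{τ ≤ t} ∈ 𝓕ₜ` for all `t ∈ [0,∞)`. -/
def IsStoppingTime (X : TSpace Ω) (τ : Ω → ℝ≥0∞) : Prop :=
  ∀ t : ℝ≥0, MeasurableSet[X.filt t] {ω | τ ω ≤ t}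

/-- Truncation at a stopping time: `T_τ(ω) = T_{τ(ω)}(ω)`. -/
noncomputable def Tstop (X : TSpace Ω) (τ : Ω → ℝ≥0∞) (ω : Ω) : Ω :=
  X.Te (τ ω) ω

lemma measurable_T (X : TSpace Ω) (t : ℝ≥0) : Measurable (X.T t) :=
  X.meas_T.comp (measurable_const.prodMk measurable_id)

lemma measurable_tau (X : TSpace Ω) {τ : Ω → ℝ≥0∞} (hτ : X.IsStoppingTime τ) :
    Measurable τ := by
  apply measurable_of_Iic
  intro x
  rcases eq_or_ne x ∞ with hx | hx
  · simp [hx]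
  · lift x to ℝ≥0 using hx
    have := hτ x
    rw [X.filt_eq x] at this
    obtain ⟨B, hB, hBeq⟩ := this
    have : τ ⁻¹' Iic (x : ℝ≥0∞) = X.T x ⁻¹' B := by
      rw [hBeq]; rfl
    rw [this]
    exact X.measurable_T x hB

lemma tau_trunc (X : TSpace Ω) {τ : Ω → ℝ≥0∞} (hτ : X.IsStoppingTime τ)
    (s t : ℝ≥0) (hts : t ≤ s) (ω : Ω) : τ (X.T s ω) ≤ t ↔ τ ω ≤ t := by
  have := hτ t
  rw [X.filt_eq t] at this
  obtain ⟨B, hB, hBeq⟩ := this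
  have h1 : ∀ ω', (τ ω' ≤ (t : ℝ≥0∞)) ↔ X.T t ω' ∈ B := by
    intro ω'
    have : ω' ∈ X.T t ⁻¹' B ↔ ω' ∈ {ω | τ ω ≤ (t : ℝ≥0∞)} := by rw [hBeq]
    exact this.symm
  rw [h1, h1, X.T_comp, min_eq_right hts]

lemma Te_coe (X : TSpace Ω) (s : ℝ≥0) (ω : Ω) : X.Te (s : ℝ≥0∞) ω = X.T s ω := by
  simp [TSpace.Te]

lemma tau_Tstop (X : TSpace Ω) {τ : Ω → ℝ≥0∞} (hτ : X.IsStoppingTime τ)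
    (ω : Ω) : τ (X.Tstop τ ω) = τ ω := by
  rcases eq_or_ne (τ ω) ∞ with h | h
  · simp [TSpace.Tstop, TSpace.Te, h]
  · lift τ ω to ℝ≥0 using h with s hs
    rw [TSpace.Tstop, ← hs, X.Te_coe]
    have hle : τ (X.T s ω) ≤ (s : ℝ≥0∞) := (X.tau_trunc hτ s s le_rfl ω).mpr hs.ge
    have hfin : τ (X.T s ω) ≠ ∞ := ne_top_of_le_ne_top ENNReal.coe_ne_top hle
    set u := (τ (X.T s ω)).toNNReal with hudef
    have hu : (u : ℝ≥0∞) = τ (X.T s ω) := ENNReal.coe_toNNReal hfin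
    have hus : u ≤ s := by rw [← ENNReal.coe_le_coe, hu]; exact hle
    have h2 : τ ω ≤ (u : ℝ≥0∞) := (X.tau_trunc hτ s u hus ω).mp hu.ge
    rw [← hs] at h2
    have hsu : s ≤ u := by exact_mod_cast h2
    rw [← hu]
    exact_mod_cast le_antisymm hus hsu

lemma Tstop_idem (X : TSpace Ω) {τ : Ω → ℝ≥0∞} (hτ : X.IsStoppingTime τ)
    (ω : Ω) : X.Tstop τ (X.Tstop τ ω) = X.Tstop τ ω := by
  rw [TSpace.Tstop, X.tau_Tstop hτ]
  rcases eq_or_ne (τ ω) ∞ with h | h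
  · simp [TSpace.Tstop, TSpace.Te, h]
  · lift τ ω to ℝ≥0 using h with s hs
    rw [X.Te_coe, TSpace.Tstop, ← hs, X.Te_coe, X.T_comp, min_self]

lemma measurable_Tstop (X : TSpace Ω) {τ : Ω → ℝ≥0∞} (hτ : X.IsStoppingTime τ) :
    Measurable (X.Tstop τ) := by
  have hmτ := X.measurable_tau hτ
  have h1 : Measurable fun ω => X.T (τ ω).toNNReal ω :=
    X.meas_T.comp ((hmτ.ennreal_toNNReal).prodMk measurable_id)
  have : X.Tstop τ = fun ω => if τ ω = ∞ then ω else X.T (τ ω).toNNReal ω := rfl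
  rw [this]
  exact Measurable.ite (hmτ (measurableSet_singleton ∞)) measurable_id h1

end TSpace


/-- For a stopping time `τ` on a T-space, `σ(T_τ) = {A ∈ 𝓕 : T_τ⁻¹(A) = A}`;
equivalently, a measurable set `A` belongs to `σ(T_τ)` iff `ω ∈ A ↔ ω_{≤τ} ∈ A` for every `ω`. -/
theorem stmt1 {Ω : Type*} [mΩ : MeasurableSpace Ω] [StandardBorelSpace Ω]
    (X : TSpace Ω) (τ : Ω → ℝ≥0∞) (hτ : X.IsStoppingTime τ) :
    (∀ A : Set Ω,
      MeasurableSet[MeasurableSpace.comap (X.Tstop τ) mΩ] A ↔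
        MeasurableSet A ∧ X.Tstop τ ⁻¹' A = A) ∧
    (∀ A : Set Ω, MeasurableSet A →
      (MeasurableSet[MeasurableSpace.comap (X.Tstop τ) mΩ] A ↔
        ∀ ω : Ω, ω ∈ A ↔ X.Tstop τ ω ∈ A)) := by
  have hmain : ∀ A : Set Ω,
      MeasurableSet[MeasurableSpace.comap (X.Tstop τ) mΩ] A ↔
        MeasurableSet A ∧ X.Tstop τ ⁻¹' A = A := by
    intro A
    constructor
    · rintro ⟨B, hB, rfl⟩
      refine ⟨X.measurable_Tstop hτ hB, ?_⟩
      ext ω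
      simp only [Set.mem_preimage, X.Tstop_idem hτ]
    · rintro ⟨hA, hfix⟩
      exact ⟨A, hA, hfix⟩
  refine ⟨hmain, fun A hA => ?_⟩
  rw [hmain A]
  simp only [hA, true_and]
  rw [Set.ext_iff]
  exact ⟨fun h ω => (h ω).symm, fun h ω => (h ω).symm⟩
end

section
/- Let (Ω, 𝓕, (𝓕_t)_{t∈[0,∞)}) be a T-space with truncation (T_t) and let τ be a stopping time. Then τ(ω) = τ(T_τ(ω)) for every ω ∈ Ω; in particular, τ is σ(T_τ)-measurable. -/
open MeasureTheory Set NNReal ENNReal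

/-!
Since `{τ ≤ s} ∈ σ(T_s)` and `T_s ∘ T_t = T_s` for `s ≤ t`, the event `{τ ≤ s}` cannot
distinguish `ω` from `T_t ω`. Comparing `τ ω` and `τ (T_t ω)` against each other's values then
gives `τ (T_t ω) = τ ω` whenever `τ ω ≤ t`, and in particular `τ ∘ T_τ = τ`.
-/

lemma MeasurableSpace.mem_iff_of_measurableSet_comap {α β : Type*} {m : MeasurableSpace β}
    {f : α → β} {s : Set α} (hs : MeasurableSet[m.comap f] s) {x y : α} (hxy : f x = f y) :
    x ∈ s ↔ y ∈ s := by
  obtain ⟨B, -, rfl⟩ := hs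
  simp only [Set.mem_preimage, hxy]

namespace TSpace

variable {Ω : Type*} [mΩ : MeasurableSpace Ω] {X : TSpace Ω} {τ : Ω → ℝ≥0∞}

lemma T_T_of_le {s t : ℝ≥0} (hst : s ≤ t) (ω : Ω) : X.T s (X.T t ω) = X.T s ω := by
  rw [X.T_comp, min_eq_right hst]

lemma Tstop_of_ne_top {ω : Ω} (h : τ ω ≠ ∞) : X.Tstop τ ω = X.T (τ ω).toNNReal ω := by
  simp [Tstop, Te, h]

namespace IsStoppingTime

lemma measurable (hτ : X.IsStoppingTime τ) : Measurable τ := by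
  refine measurable_of_Iic fun x ↦ ?_
  induction x using ENNReal.recTopCoe with
  | top => simp
  | coe t => exact X.iSup_filt ▸ le_iSup X.filt t _ (hτ t)

lemma apply_T_le_coe_iff {s t : ℝ≥0} (hτ : X.IsStoppingTime τ) (hst : s ≤ t) (ω : Ω) :
    τ (X.T t ω) ≤ s ↔ τ ω ≤ s :=
  MeasurableSpace.mem_iff_of_measurableSet_comap (s := {ω | τ ω ≤ s})
    (by rw [← X.filt_eq]; exact hτ s) (T_T_of_le hst ω)

/-- Galmarino's test. -/
lemma apply_T_of_le {t : ℝ≥0} (hτ : X.IsStoppingTime τ) {ω : Ω} (hωt : τ ω ≤ t) :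
    τ (X.T t ω) = τ ω := by
  obtain ⟨r, hr⟩ : ∃ r : ℝ≥0, (r : ℝ≥0∞) = τ ω :=
    WithTop.ne_top_iff_exists.mp (ne_top_of_le_ne_top coe_ne_top hωt)
  have hrt : r ≤ t := by exact_mod_cast hr ▸ hωt
  have hT_le : τ (X.T t ω) ≤ r := (hτ.apply_T_le_coe_iff hrt ω).2 hr.ge
  obtain ⟨q, hq⟩ : ∃ q : ℝ≥0, (q : ℝ≥0∞) = τ (X.T t ω) :=
    WithTop.ne_top_iff_exists.mp (ne_top_of_le_ne_top coe_ne_top hT_le)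
  have hqr : q ≤ r := by exact_mod_cast hq ▸ hT_le
  refine le_antisymm (hr ▸ hT_le) ?_
  calc τ ω ≤ q := (hτ.apply_T_le_coe_iff (hqr.trans hrt) ω).1 hq.ge
    _ = τ (X.T t ω) := hq

lemma apply_Tstop (hτ : X.IsStoppingTime τ) (ω : Ω) : τ (X.Tstop τ ω) = τ ω := by
  by_cases h : τ ω = ∞
  · simp [Tstop, Te, h]
  · rw [Tstop_of_ne_top h, hτ.apply_T_of_le (coe_toNNReal h).ge]

end IsStoppingTime

end TSpace

theorem stmt2_general {Ω : Type*} [mΩ : MeasurableSpace Ω]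
    (X : TSpace Ω) (τ : Ω → ℝ≥0∞) (hτ : X.IsStoppingTime τ) :
    (∀ ω : Ω, τ ω = τ (X.Tstop τ ω)) ∧
      Measurable[MeasurableSpace.comap (X.Tstop τ) mΩ] τ := by
  have hfix : ∀ ω, τ ω = τ (X.Tstop τ ω) := fun ω ↦ (hτ.apply_Tstop ω).symm
  refine ⟨hfix, ?_⟩
  convert hτ.measurable.comp (comap_measurable (X.Tstop τ)) using 1
  exact funext hfix

/-- For a stopping time `τ` on a T-space, `τ(ω) = τ(T_τ(ω))` for every `ω`;
in particular `τ` is `σ(T_τ)`-measurable. -/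
theorem stmt2 {Ω : Type*} [mΩ : MeasurableSpace Ω] [StandardBorelSpace Ω]
    (X : TSpace Ω) (τ : Ω → ℝ≥0∞) (hτ : X.IsStoppingTime τ) :
    (∀ ω : Ω, τ ω = τ (X.Tstop τ ω)) ∧
      Measurable[MeasurableSpace.comap (X.Tstop τ) mΩ] τ :=
  stmt2_general (mΩ := mΩ) X τ hτ
end

section
/- Let (Ω, 𝓕, (𝓕_t)_{t∈[0,∞)}) be a T-space with truncation (T_t) and let τ be a stopping time. Then σ(T_τ) = 𝓕_τ, where 𝓕_τ = {A ∈ 𝓕 : A ∩ {τ ≤ t} ∈ 𝓕_t for all t ∈ [0,∞)}. -/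
open MeasureTheory Set NNReal ENNReal

section Aux

variable {Ω : Type*} [mΩ : MeasurableSpace Ω]

lemma TSpace.measurable_T' (X : TSpace Ω) (t : ℝ≥0) : Measurable (X.T t) :=
  X.meas_T.comp measurable_prodMk_left

lemma TSpace.filt_le (X : TSpace Ω) (t : ℝ≥0) : X.filt t ≤ mΩ := by
  rw [X.filt_eq]
  exact (X.measurable_T' t).comap_le

lemma TSpace.T_idem (X : TSpace Ω) (t : ℝ≥0) (ω : Ω) : X.T t (X.T t ω) = X.T t ω := by
  rw [X.T_comp, min_self]

lemma TSpace.filt_mono (X : TSpace Ω) {s t : ℝ≥0} (hst : s ≤ t) : X.filt s ≤ X.filt t := by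
  rw [X.filt_eq, X.filt_eq]
  intro S hS
  rw [MeasurableSpace.measurableSet_comap] at hS ⊢
  obtain ⟨B, hB, rfl⟩ := hS
  refine ⟨X.T s ⁻¹' B, (X.measurable_T' s) hB, ?_⟩
  ext ω
  simp only [Set.mem_preimage, X.T_comp, min_eq_right hst]

/-- Key idempotence fact: membership in an `𝓕ₜ`-set is invariant under `T t`. -/
lemma TSpace.mem_iff_of_filt (X : TSpace Ω) {t : ℝ≥0} {S : Set Ω}
    (hS : MeasurableSet[X.filt t] S) (ω : Ω) : X.T t ω ∈ S ↔ ω ∈ S := by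
  rw [X.filt_eq] at hS
  obtain ⟨B, -, rfl⟩ := hS
  simp only [Set.mem_preimage, X.T_idem]

lemma TSpace.measurable_tau_s3 (X : TSpace Ω) {τ : Ω → ℝ≥0∞} (hτ : X.IsStoppingTime τ) :
    Measurable τ := by
  refine measurable_of_Iic fun x => ?_
  rcases eq_or_ne x ∞ with rfl | hx
  · simp only [Set.Iic_top (α := ℝ≥0∞), Set.preimage_univ]
    exact MeasurableSet.univ
  · have : τ ⁻¹' Set.Iic x = {ω | τ ω ≤ (x.toNNReal : ℝ≥0∞)} := by
      ext ω; simp [ENNReal.coe_toNNReal hx]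
    rw [this]
    exact X.filt_le _ _ (hτ x.toNNReal)

lemma TSpace.measurable_Tstop_s3 (X : TSpace Ω) {τ : Ω → ℝ≥0∞} (hτ : X.IsStoppingTime τ) :
    Measurable (X.Tstop τ) := by
  have h1 : Measurable fun p : ℝ≥0∞ × Ω => X.Te p.1 p.2 := by
    unfold TSpace.Te
    refine Measurable.ite ?_ measurable_snd ?_
    · exact measurable_fst (measurableSet_singleton ∞)
    · exact X.meas_T.comp ((ENNReal.measurable_toNNReal.comp measurable_fst).prodMk
        measurable_snd)
  exact h1.comp ((X.measurable_tau_s3 hτ).prodMk measurable_id)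

/-- For `s ≤ t`, `τ (T t ω) ≤ s ↔ τ ω ≤ s`. -/
lemma TSpace.tau_T_le_iff (X : TSpace Ω) {τ : Ω → ℝ≥0∞} (hτ : X.IsStoppingTime τ)
    {s t : ℝ≥0} (hst : s ≤ t) (ω : Ω) : τ (X.T t ω) ≤ (s : ℝ≥0∞) ↔ τ ω ≤ (s : ℝ≥0∞) :=
  X.mem_iff_of_filt (X.filt_mono hst _ (hτ s)) ω

/-- If `τ ω ≤ t` then `τ (T t ω) = τ ω`. -/
lemma TSpace.tau_T_eq (X : TSpace Ω) {τ : Ω → ℝ≥0∞} (hτ : X.IsStoppingTime τ)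
    {t : ℝ≥0} {ω : Ω} (h : τ ω ≤ (t : ℝ≥0∞)) : τ (X.T t ω) = τ ω := by
  have hωfin : τ ω ≠ ∞ := ne_top_of_le_ne_top ENNReal.coe_ne_top h
  have h1 : τ (X.T t ω) ≤ τ ω := by
    have h2 : (τ ω).toNNReal ≤ t := by
      rwa [← ENNReal.coe_le_coe, ENNReal.coe_toNNReal hωfin]
    have := (X.tau_T_le_iff hτ h2 ω).mpr (le_of_eq (ENNReal.coe_toNNReal hωfin).symm)
    rwa [ENNReal.coe_toNNReal hωfin] at this
  have h3 : τ (X.T t ω) ≤ (t : ℝ≥0∞) := (X.tau_T_le_iff hτ le_rfl ω).mpr h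
  have hTfin : τ (X.T t ω) ≠ ∞ := ne_top_of_le_ne_top ENNReal.coe_ne_top h3
  have h4 : (τ (X.T t ω)).toNNReal ≤ t := by
    rwa [← ENNReal.coe_le_coe, ENNReal.coe_toNNReal hTfin]
  have h5 : τ ω ≤ τ (X.T t ω) := by
    have := (X.tau_T_le_iff hτ h4 ω).mp (le_of_eq (ENNReal.coe_toNNReal hTfin).symm)
    rwa [ENNReal.coe_toNNReal hTfin] at this
  exact le_antisymm h1 h5

/-- If `τ ω ≤ t` then `Tstop τ ω = T (τ ω) ω` in finite form. -/
lemma TSpace.Tstop_eq_of_le (X : TSpace Ω) {τ : Ω → ℝ≥0∞} {t : ℝ≥0} {ω : Ω}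
    (h : τ ω ≤ (t : ℝ≥0∞)) : X.Tstop τ ω = X.T (τ ω).toNNReal ω := by
  have hωfin : τ ω ≠ ∞ := ne_top_of_le_ne_top ENNReal.coe_ne_top h
  simp [TSpace.Tstop, TSpace.Te, hωfin]

/-- If `τ ω ≤ t` then `Tstop τ (T t ω) = Tstop τ ω`. -/
lemma TSpace.Tstop_T (X : TSpace Ω) {τ : Ω → ℝ≥0∞} (hτ : X.IsStoppingTime τ)
    {t : ℝ≥0} {ω : Ω} (h : τ ω ≤ (t : ℝ≥0∞)) : X.Tstop τ (X.T t ω) = X.Tstop τ ω := by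
  have hωfin : τ ω ≠ ∞ := ne_top_of_le_ne_top ENNReal.coe_ne_top h
  have hT : τ (X.T t ω) = τ ω := X.tau_T_eq hτ h
  have h2 : (τ ω).toNNReal ≤ t := by
    rwa [← ENNReal.coe_le_coe, ENNReal.coe_toNNReal hωfin]
  rw [X.Tstop_eq_of_le (hT.le.trans h), hT, X.Tstop_eq_of_le h, X.T_comp,
    min_eq_right h2]

end Aux

/-- For a stopping time `τ` on a T-space, `σ(T_τ) = 𝓕_τ`, where
`𝓕_τ = {A ∈ 𝓕 : A ∩ {τ ≤ t} ∈ 𝓕ₜ for all t}`. -/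
theorem stmt3 {Ω : Type*} [mΩ : MeasurableSpace Ω] [StandardBorelSpace Ω]
    (X : TSpace Ω) (τ : Ω → ℝ≥0∞) (hτ : X.IsStoppingTime τ) :
    ∀ A : Set Ω,
      MeasurableSet[MeasurableSpace.comap (X.Tstop τ) mΩ] A ↔
        MeasurableSet A ∧ ∀ t : ℝ≥0, MeasurableSet[X.filt t] (A ∩ {ω | τ ω ≤ (t : ℝ≥0∞)}) := by
  
  intro A
  constructor
  · rintro ⟨B, hB, rfl⟩
    constructor
    · exact X.measurable_Tstop_s3 hτ hB
    · intro t
      have hmeas : MeasurableSet (X.Tstop τ ⁻¹' B ∩ {ω | τ ω ≤ (t : ℝ≥0∞)}) :=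
        ((X.measurable_Tstop_s3 hτ) hB).inter (X.measurable_tau_s3 hτ (measurableSet_Iic (a := (t : ℝ≥0∞))))
      have hset : X.Tstop τ ⁻¹' B ∩ {ω | τ ω ≤ (t : ℝ≥0∞)} =
          X.T t ⁻¹' (X.Tstop τ ⁻¹' B ∩ {ω | τ ω ≤ (t : ℝ≥0∞)}) := by
        ext ω
        simp only [Set.mem_inter_iff, Set.mem_preimage, Set.mem_setOf_eq]
        constructor
        · rintro ⟨hA, hle⟩
          refine ⟨?_, (X.tau_T_le_iff hτ le_rfl ω).mpr hle⟩
          rwa [X.Tstop_T hτ hle]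
        · rintro ⟨hA, hle⟩
          have hle' : τ ω ≤ (t : ℝ≥0∞) := (X.tau_T_le_iff hτ le_rfl ω).mp hle
          refine ⟨?_, hle'⟩
          rwa [X.Tstop_T hτ hle'] at hA
      rw [X.filt_eq, hset]
      exact ⟨_, hmeas, rfl⟩
  · rintro ⟨hA, h⟩
    refine ⟨A, hA, ?_⟩
    ext ω
    simp only [Set.mem_preimage]
    rcases eq_or_ne (τ ω) ∞ with htop | htop
    · simp [TSpace.Tstop, TSpace.Te, htop]
    · set t : ℝ≥0 := (τ ω).toNNReal with ht
      have hle : τ ω ≤ (t : ℝ≥0∞) := le_of_eq (ENNReal.coe_toNNReal htop).symm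
      have hTs : X.Tstop τ ω = X.T t ω := X.Tstop_eq_of_le hle
      have hiff := X.mem_iff_of_filt (h t) ω
      simp only [Set.mem_inter_iff, Set.mem_setOf_eq] at hiff
      have hτT : τ (X.T t ω) ≤ (t : ℝ≥0∞) := (X.tau_T_le_iff hτ le_rfl ω).mpr hle
      rw [hTs]
      constructor
      · intro hmem
        exact (hiff.mp ⟨hmem, hτT⟩).1
      · intro hmem
        exact (hiff.mpr ⟨hmem, hle⟩).1
end

section
/- Let (Ω, 𝓕, (𝓕_t)) and (Ω̃, 𝓕̃, (𝓕̃_t)) be T-spaces with truncations (T_t) and (T̃_t) respectively. A measurable map F : Ω → Ω̃ is non-anticipating (i.e., F⁻¹(𝓕̃_t) ⊆ 𝓕_t for every t ∈ [0,∞)) if and only if T̃_t ∘ F ∘ T_t = T̃_t ∘ F for every t ∈ [0,∞). -/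
open MeasureTheory Set NNReal ENNReal

/-- A measurable map `F : Ω → Ω̃` between T-spaces is non-anticipating
(`F⁻¹(𝓕̃ₜ) ⊆ 𝓕ₜ` for every `t`) if and only if `T̃ₜ ∘ F ∘ Tₜ = T̃ₜ ∘ F` for every `t`. -/
theorem stmt5 {Ω Ω' : Type*} [mΩ : MeasurableSpace Ω] [StandardBorelSpace Ω]
    [mΩ' : MeasurableSpace Ω'] [StandardBorelSpace Ω']
    (X : TSpace Ω) (Y : TSpace Ω') (F : Ω → Ω') (hF : Measurable F) :
    (∀ t : ℝ≥0, MeasurableSpace.comap F (Y.filt t) ≤ X.filt t) ↔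
      ∀ t : ℝ≥0, (Y.T t) ∘ F ∘ (X.T t) = (Y.T t) ∘ F := by
  letI := upgradeStandardBorel Ω'
  have hXt : ∀ t : ℝ≥0, Measurable (X.T t) := fun t =>
    X.meas_T.comp (measurable_const.prodMk measurable_id)
  have hYt : ∀ t : ℝ≥0, Measurable (Y.T t) := fun t =>
    Y.meas_T.comp (measurable_const.prodMk measurable_id)
  have hTT : ∀ t ω, X.T t (X.T t ω) = X.T t ω := fun t ω => by
    rw [X.T_comp, min_self]
  constructor
  · intro h t
    funext ω
    have h1 : @Measurable Ω Ω' (X.filt t) (Y.filt t) F := fun s hs => h t _ ⟨s, hs, rfl⟩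
    have h2 : @Measurable Ω' Ω' (Y.filt t) mΩ' (Y.T t) := by
      rw [Y.filt_eq]; exact comap_measurable _
    have hg : @Measurable Ω Ω' (X.filt t) mΩ' (fun ω => Y.T t (F ω)) := h2.comp h1
    have hsing : MeasurableSet[X.filt t]
        ((fun ω' => Y.T t (F ω')) ⁻¹' {Y.T t (F ω)}) :=
      hg (measurableSet_singleton _)
    rw [X.filt_eq] at hsing
    obtain ⟨A, -, hpre⟩ := hsing
    have hω : ω ∈ (X.T t) ⁻¹' A := by rw [hpre]; exact rfl
    have hω2 : X.T t ω ∈ (X.T t) ⁻¹' A := by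
      simp only [Set.mem_preimage, hTT] at hω ⊢; exact hω
    rw [hpre] at hω2
    exact hω2
  · intro h t
    rintro s ⟨s', hs', rfl⟩
    rw [Y.filt_eq] at hs'
    obtain ⟨B, hB, rfl⟩ := hs'
    rw [X.filt_eq]
    refine ⟨(fun ω => Y.T t (F ω)) ⁻¹' B, (hYt t).comp hF hB, ?_⟩
    ext ω
    simp only [Set.mem_preimage]
    have := congrFun (h t) ω
    simp only [Function.comp_apply] at this
    rw [this]
end

section
/- Let Ω be a TC-space whose underlying space is Polish, let 𝒫 be an analytic and disintegrable control correspondence on Ω, let G be a tail random variable with ∫ G⁺ dμ < ∞ for every μ ∈ ⋃_ω 𝒫(ω), and let v(ω) = sup_{μ ∈ 𝒫(ω)} ∫ G dμ. Then for each ω ∈ Ω and each stopping time τ: v(ω) ≤ sup_{μ ∈ 𝒫(ω)} ∫ ( v(T_τ(ω')) · 1_{τ(ω') < ∞} + G(ω') · 1_{τ(ω') = ∞} ) μ(dω'), where the integral is taken with respect to the universal completion of μ. -/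
open MeasureTheory Set NNReal ENNReal

open MeasureTheory Set NNReal ENNReal

/-- The positive part of an extended-real number, as an element of `ℝ≥0∞`. -/
noncomputable def EReal.posPart (x : EReal) : ℝ≥0∞ :=
  if x = ⊤ then ⊤ else ENNReal.ofReal x.toReal

/-- The (possibly `-∞`-valued) integral `∫ G dμ = ∫ G⁺ dμ − ∫ G⁻ dμ` of an extended-real
function, meaningful whenever `∫ G⁺ dμ < ∞`. -/
noncomputable def eIntegral {Ω : Type*} [MeasurableSpace Ω] (μ : Measure Ω)
    (G : Ω → EReal) : EReal :=
  ((∫⁻ ω, (G ω).posPart ∂μ : ℝ≥0∞) : EReal) - ((∫⁻ ω, (-(G ω)).posPart ∂μ : ℝ≥0∞) : EReal)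

/-- A map is universally measurable if it is `μ`-null measurable (i.e. measurable for the
`μ`-completed σ-algebra) for every Borel probability measure `μ`. -/
def UnivMeasurable {α β : Type*} [MeasurableSpace α] [MeasurableSpace β] (f : α → β) : Prop :=
  ∀ μ : Measure α, IsProbabilityMeasure μ → NullMeasurable f μ

/-- A (universally measurable) kernel from `α` to `Ω`: a family of Borel probability measures
`ν x` such that `x ↦ ν x B` is universally measurable for every Borel set `B`. -/
def IsUKernel {α Ω : Type*} [MeasurableSpace α] [MeasurableSpace Ω]
    (ν : α → ProbabilityMeasure Ω) : Prop :=
  ∀ B : Set Ω, MeasurableSet B → UnivMeasurable fun x => (ν x : Measure Ω) B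

/-- A TC-space (truncation–concatenation space): a T-space together with a measurable
compatibility set `𝒞 ⊆ Ω × [0,∞) × Ω` and a concatenation operator `∗ : 𝒞 → Ω`
(extended arbitrarily off `𝒞`, measurable on `𝒞`) satisfying the compatibility and
truncation axioms of Definition of TC-spaces. -/
structure TCSpace (Ω : Type*) [mΩ : MeasurableSpace Ω] extends TSpace Ω where
  Comp : Set (Ω × ℝ≥0 × Ω)
  meas_Comp : MeasurableSet Comp
  conc : Ω → ℝ≥0 → Ω → Ω
  meas_conc : Measurable fun p : Comp => conc (p : Ω × ℝ≥0 × Ω).1 (p : Ω × ℝ≥0 × Ω).2.1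
      (p : Ω × ℝ≥0 × Ω).2.2
  comp_left : ∀ (ω : Ω) (t : ℝ≥0) (ω' : Ω), ((ω, t, ω') ∈ Comp ↔ (T t ω, t, ω') ∈ Comp)
  comp_right : ∀ (ω : Ω) (t : ℝ≥0) (ω' : Ω) (s : ℝ≥0),
      ((ω, t, ω') ∈ Comp ↔ (ω, t, T s ω') ∈ Comp)
  conc_left : ∀ (ω : Ω) (t : ℝ≥0) (ω' : Ω), (ω, t, ω') ∈ Comp →
      conc ω t ω' = conc (T t ω) t ω'
  trunc_conc_le : ∀ (ω : Ω) (t : ℝ≥0) (ω' : Ω) (s : ℝ≥0), (ω, t, ω') ∈ Comp → s ≤ t →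
      T s (conc ω t ω') = T s ω
  trunc_conc_gt : ∀ (ω : Ω) (t : ℝ≥0) (ω' : Ω) (s : ℝ≥0), (ω, t, ω') ∈ Comp → t < s →
      T s (conc ω t ω') = conc ω t (T (s - t) ω')

namespace TCSpace

variable {Ω : Type*} [mΩ : MeasurableSpace Ω]

/-- Concatenation at an extended time, with the convention `ω ∗_∞ ω' = ω`. -/
noncomputable def concE (X : TCSpace Ω) (ω : Ω) (t : ℝ≥0∞) (ω' : Ω) : Ω :=
  if t = ∞ then ω else X.conc ω t.toNNReal ω'

/-- Extended compatibility: any two elements are compatible at `t = ∞`. -/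
def CompE (X : TCSpace Ω) (ω : Ω) (t : ℝ≥0∞) (ω' : Ω) : Prop :=
  t = ∞ ∨ (ω, t.toNNReal, ω') ∈ X.Comp

/-- A probability measure `μ` and a kernel `ν` are compatible at a stopping time `τ`:
`ν^{≤τ}_ω(𝒞_{ω,τ(ω)}) = 1` for `μ`-almost every `ω`. -/
def MeasCompatible (X : TCSpace Ω) (μ : Measure Ω) (ν : Ω → ProbabilityMeasure Ω)
    (τ : Ω → ℝ≥0∞) : Prop :=
  ∀ᵐ ω ∂μ, (ν (X.toTSpace.Tstop τ ω) : Measure Ω) {ω' | X.CompE ω (τ ω) ω'} = 1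

/-- The concatenation `μ ∗_τ ν` of a measure and a kernel at a stopping time `τ`: the
pushforward of `μ(dω) ν^{≤τ}_ω(dω')` under `(ω, ω') ↦ ω ∗_{τ(ω)} ω'`. -/
noncomputable def concMeasure (X : TCSpace Ω) (μ : Measure Ω)
    (ν : Ω → ProbabilityMeasure Ω) (τ : Ω → ℝ≥0∞) : Measure Ω :=
  μ.bind fun ω => Measure.map (fun ω' => X.concE ω (τ ω) ω') (ν (X.toTSpace.Tstop τ ω))

/-- A tail map: `G(ω ∗_t ω') = G(ω')` for all finite `t` and compatible pairs. -/
def IsTail (X : TCSpace Ω) (G : Ω → EReal) : Prop :=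
  ∀ (t : ℝ≥0) (ω ω' : Ω), (ω, t, ω') ∈ X.Comp → G (X.conc ω t ω') = G ω'

end TCSpace

/-- A universally measurable selector of a control correspondence `P`. -/
def IsSelector {Ω : Type*} [MeasurableSpace Ω] (P : Ω → Set (ProbabilityMeasure Ω))
    (ν : Ω → ProbabilityMeasure Ω) : Prop :=
  IsUKernel ν ∧ ∀ ω, ν ω ∈ P ω

/-- A control correspondence on a TC-space is concatenable if for every `ω`, `μ ∈ P ω`,
`P`-selector `ν` and stopping time `τ`, `ν` is compatible with `μ` at `τ` and
`μ ∗_τ ν ∈ P ω`. -/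
def TCSpace.Concatenable {Ω : Type*} [MeasurableSpace Ω] (X : TCSpace Ω)
    (P : Ω → Set (ProbabilityMeasure Ω)) : Prop :=
  ∀ (ω : Ω) (μ : ProbabilityMeasure Ω), μ ∈ P ω →
    ∀ ν : Ω → ProbabilityMeasure Ω, IsSelector P ν →
      ∀ τ : Ω → ℝ≥0∞, X.toTSpace.IsStoppingTime τ →
        X.MeasCompatible (μ : Measure Ω) ν τ ∧
          ∃ μ' ∈ P ω, (μ' : Measure Ω) = X.concMeasure (μ : Measure Ω) ν τ

/-- A control correspondence on a TC-space is disintegrable if for every `ω`, `μ ∈ P ω` and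
stopping time `τ` there is a `P`-selector `ν`, compatible with `μ` at `τ`, with
`μ = μ ∗_τ ν`. -/
def TCSpace.Disintegrable {Ω : Type*} [MeasurableSpace Ω] (X : TCSpace Ω)
    (P : Ω → Set (ProbabilityMeasure Ω)) : Prop :=
  ∀ (ω : Ω) (μ : ProbabilityMeasure Ω), μ ∈ P ω →
    ∀ τ : Ω → ℝ≥0∞, X.toTSpace.IsStoppingTime τ →
      ∃ ν : Ω → ProbabilityMeasure Ω, IsSelector P ν ∧
        X.MeasCompatible (μ : Measure Ω) ν τ ∧
          (μ : Measure Ω) = X.concMeasure (μ : Measure Ω) ν τ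

/-! For `μ ∈ P ω`, disintegrability gives `μ = μ ∗_τ ν` with a `P`-selector `ν`, so `μ` is the
mixture over `ω₁ ∼ μ` of the laws `κ ω₁` of `ω₁ ∗_{τ ω₁} ω'` with `ω' ∼ ν (T_τ ω₁)`. If
`τ ω₁ = ∞` then `κ ω₁` is the Dirac mass at `ω₁`, so `∫ G dκ ω₁ = G ω₁`; otherwise the tail
property gives `∫ G dκ ω₁ = ∫ G dν (T_τ ω₁) ≤ v (T_τ ω₁)`. Integrating this pointwise bound
against `μ` bounds `∫ G dμ`; since `∫ G⁺ dμ < ∞`, the extended-real subtractions on both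
sides behave, and the lower Lebesgue integral needs no measurability of the right-hand side. -/

namespace EReal

lemma posPart_eq_toENNReal (x : EReal) : x.posPart = x.toENNReal := rfl

lemma coe_posPart_sub_posPart_neg (x : EReal) : (x.posPart : EReal) - (-x).posPart = x := by
  induction x using EReal.rec with
  | bot => simp [posPart_eq_toENNReal]
  | top => simp [posPart_eq_toENNReal]
  | coe r => rcases le_total 0 r with hr | hr <;> simp [posPart_eq_toENNReal, hr]

lemma coe_ennreal_sub_le_coe_ennreal_sub {a b c d : ℝ≥0∞} (ha : a ≠ ⊤) (hdb : d ≤ b)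
    (h : a + d ≤ b + c) : (a : EReal) - b ≤ (c : EReal) - d := by
  rcases eq_or_ne b ⊤ with rfl | hb
  · simp
  have hd : d ≠ ⊤ := ne_top_of_le_ne_top hb hdb
  rcases eq_or_ne c ⊤ with rfl | hc
  · lift d to ℝ≥0 using hd
    simp
  lift a to ℝ≥0 using ha
  lift b to ℝ≥0 using hb
  lift c to ℝ≥0 using hc
  lift d to ℝ≥0 using hd
  simp only [coe_nnreal_eq_coe_real, ← coe_sub, EReal.coe_le_coe_iff]
  have : (a : ℝ) + d ≤ b + c := by exact_mod_cast h
  linarith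

lemma add_posPart_neg_le_of_coe_ennreal_sub_le {a b : ℝ≥0∞} (ha : a ≠ ⊤) {x : EReal}
    (h : (a : EReal) - b ≤ x) : a + (-x).posPart ≤ b + x.posPart ∧ (-x).posPart ≤ b := by
  rcases eq_or_ne b ⊤ with rfl | hb
  · simp
  lift a to ℝ≥0 using ha
  lift b to ℝ≥0 using hb
  rw [coe_nnreal_eq_coe_real, coe_nnreal_eq_coe_real] at h
  induction x using EReal.rec with
  | bot =>
    rw [← coe_sub, le_bot_iff] at h
    exact absurd h (coe_ne_bot _)
  | top => simp [posPart_eq_toENNReal]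
  | coe r =>
    rw [← coe_sub, EReal.coe_le_coe_iff] at h
    simp only [posPart_eq_toENNReal, ← coe_neg, real_coe_toENNReal]
    rw [← ENNReal.ofReal_coe_nnreal, ← ENNReal.ofReal_coe_nnreal]
    rcases le_total 0 r with hr | hr
    · rw [ENNReal.ofReal_of_nonpos (neg_nonpos.2 hr), add_zero,
        ← ENNReal.ofReal_add b.coe_nonneg hr]
      exact ⟨ENNReal.ofReal_le_ofReal (by linarith), zero_le⟩
    · rw [ENNReal.ofReal_of_nonpos hr, add_zero,
        ← ENNReal.ofReal_add a.coe_nonneg (neg_nonneg.2 hr)]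
      exact ⟨ENNReal.ofReal_le_ofReal (by linarith),
        ENNReal.ofReal_le_ofReal (by linarith [b.coe_nonneg])⟩

end EReal

section ExtendedIntegral

variable {α β : Type*} [MeasurableSpace α] [MeasurableSpace β]

lemma AEMeasurable.ereal_posPart {μ : Measure α} {G : α → EReal} (hG : AEMeasurable G μ) :
    AEMeasurable (fun x => (G x).posPart) μ :=
  hG.ereal_toENNReal

lemma AEMeasurable.ereal_posPart_neg {μ : Measure α} {G : α → EReal} (hG : AEMeasurable G μ) :
    AEMeasurable (fun x => (-G x).posPart) μ :=
  hG.neg.ereal_toENNReal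

lemma eIntegral_congr_ae {μ : Measure α} {G G' : α → EReal} (h : G =ᵐ[μ] G') :
    eIntegral μ G = eIntegral μ G' := by
  simp only [eIntegral]
  congr 2 <;> exact lintegral_congr_ae (h.mono fun x hx => by simp only [hx])

lemma eIntegral_map {μ : Measure α} {f : α → β} {G : β → EReal} (hf : AEMeasurable f μ)
    (hG : AEMeasurable G (μ.map f)) : eIntegral (μ.map f) G = eIntegral μ (G ∘ f) := by
  rw [eIntegral, eIntegral, lintegral_map' hG.ereal_posPart hf,
    lintegral_map' hG.ereal_posPart_neg hf]
  rfl

lemma Filter.Eventually.of_ae_dirac {a : α} {p : α → Prop} (h : ∀ᵐ x ∂Measure.dirac a, p x) :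
    p a := by
  -- `{x | ¬p x}` need not be measurable: the outer Dirac measure of any set containing `a` is 1.
  by_contra hpa
  exact one_ne_zero ((Measure.dirac_apply_of_mem (s := {x | ¬p x}) hpa).symm.trans (ae_iff.1 h))

lemma lintegral_dirac_of_aemeasurable {a : α} {f : α → ℝ≥0∞}
    (hf : AEMeasurable f (Measure.dirac a)) : ∫⁻ x, f x ∂Measure.dirac a = f a := by
  rw [lintegral_congr_ae hf.ae_eq_mk, lintegral_dirac' a hf.measurable_mk]
  exact hf.ae_eq_mk.of_ae_dirac.symm

lemma eIntegral_dirac {a : α} {G : α → EReal} (hG : AEMeasurable G (Measure.dirac a)) :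
    eIntegral (Measure.dirac a) G = G a := by
  rw [eIntegral, lintegral_dirac_of_aemeasurable hG.ereal_posPart,
    lintegral_dirac_of_aemeasurable hG.ereal_posPart_neg]
  exact EReal.coe_posPart_sub_posPart_neg _

lemma coe_lintegral_sub_le_eIntegral {μ : Measure α} {a b : α → ℝ≥0∞} {F : α → EReal}
    (ha : AEMeasurable a μ) (hb : AEMeasurable b μ) (ha_int : ∫⁻ x, a x ∂μ ≠ ⊤)
    (h : ∀ᵐ x ∂μ, (a x : EReal) - b x ≤ F x) :
    ((∫⁻ x, a x ∂μ : ℝ≥0∞) : EReal) - (∫⁻ x, b x ∂μ : ℝ≥0∞) ≤ eIntegral μ F := by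
  have hpt : ∀ᵐ x ∂μ, a x + (-F x).posPart ≤ b x + (F x).posPart ∧ (-F x).posPart ≤ b x := by
    filter_upwards [ae_lt_top' ha ha_int, h] with x hax hx
    exact EReal.add_posPart_neg_le_of_coe_ennreal_sub_le hax.ne hx
  refine EReal.coe_ennreal_sub_le_coe_ennreal_sub ha_int
    (lintegral_mono_ae (hpt.mono fun _ hx => hx.2)) ?_
  calc ∫⁻ x, a x ∂μ + ∫⁻ x, (-F x).posPart ∂μ = ∫⁻ x, a x + (-F x).posPart ∂μ :=
        (lintegral_add_left' ha _).symm
    _ ≤ ∫⁻ x, b x + (F x).posPart ∂μ := lintegral_mono_ae (hpt.mono fun _ hx => hx.1)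
    _ = ∫⁻ x, b x ∂μ + ∫⁻ x, (F x).posPart ∂μ := lintegral_add_left' hb _

lemma MeasureTheory.Measure.aemeasurable_of_bind_ne_zero {μ : Measure α} {κ : α → Measure β}
    (h : μ.bind κ ≠ 0) : AEMeasurable κ μ := by
  contrapose! h
  rw [Measure.bind, Measure.map_of_not_aemeasurable h, Measure.join_zero]

theorem eIntegral_bind_le {μ : Measure α} {κ : α → Measure β} {G : β → EReal} {F : α → EReal}
    (hκ : AEMeasurable κ μ) (hG : AEMeasurable G (μ.bind κ))
    (hG_int : ∫⁻ x, (G x).posPart ∂μ.bind κ ≠ ⊤) (h : ∀ᵐ a ∂μ, eIntegral (κ a) G ≤ F a) :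
    eIntegral (μ.bind κ) G ≤ eIntegral μ F := by
  have hGp := hG.ereal_posPart
  have hGn := hG.ereal_posPart_neg
  rw [eIntegral, Measure.lintegral_bind hκ hGp, Measure.lintegral_bind hκ hGn]
  rw [Measure.lintegral_bind hκ hGp] at hG_int
  exact coe_lintegral_sub_le_eIntegral ((Measure.aemeasurable_lintegral hGp).comp_aemeasurable hκ)
    ((Measure.aemeasurable_lintegral hGn).comp_aemeasurable hκ) hG_int h

end ExtendedIntegral

namespace TCSpace

variable {Ω : Type*} [MeasurableSpace Ω] (X : TCSpace Ω)

lemma measurableSet_setOf_mem_comp (ω : Ω) (t : ℝ≥0) :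
    MeasurableSet {ω' | (ω, t, ω') ∈ X.Comp} :=
  (measurable_prodMk_left.comp measurable_prodMk_left) X.meas_Comp

lemma aemeasurable_conc {ω : Ω} {t : ℝ≥0} {ν : Measure Ω}
    (h : ∀ᵐ ω' ∂ν, (ω, t, ω') ∈ X.Comp) : AEMeasurable (X.conc ω t) ν := by
  have hsection : Measurable fun x : {ω' | (ω, t, ω') ∈ X.Comp} => (⟨(ω, t, x.1), x.2⟩ : X.Comp) :=
    ((measurable_prodMk_left.comp measurable_prodMk_left).comp measurable_subtype_coe).subtype_mk
  rw [← Measure.restrict_eq_self_of_ae_mem h]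
  exact aemeasurable_restrict_of_measurable_subtype (X.measurableSet_setOf_mem_comp ω t)
    (X.meas_conc.comp hsection)

lemma eIntegral_map_conc {G : Ω → EReal} (hG : X.IsTail G) {ω : Ω} {t : ℝ≥0} {ν : Measure Ω}
    (h : ∀ᵐ ω' ∂ν, (ω, t, ω') ∈ X.Comp) (hGm : AEMeasurable G (ν.map (X.conc ω t))) :
    eIntegral (ν.map (X.conc ω t)) G = eIntegral ν G := by
  rw [eIntegral_map (X.aemeasurable_conc h) hGm]
  exact eIntegral_congr_ae (h.mono fun ω' hω' => hG t ω ω' hω')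

theorem eIntegral_map_concE {G : Ω → EReal} (hGu : UnivMeasurable G) (hG : X.IsTail G) {ω : Ω}
    {t : ℝ≥0∞} {ν : Measure Ω} [IsProbabilityMeasure ν] (h : ν {ω' | X.CompE ω t ω'} = 1) :
    eIntegral (ν.map (X.concE ω t)) G = if t < ⊤ then eIntegral ν G else G ω := by
  rcases eq_or_ne t ⊤ with rfl | ht
  · have hconst : X.concE ω ⊤ = fun _ => ω := funext fun _ => if_pos rfl
    rw [hconst, Measure.map_const, measure_univ, one_smul, if_neg (lt_irrefl _)]
    exact eIntegral_dirac (hGu _ inferInstance).aemeasurable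
  lift t to ℝ≥0 using ht
  have hcomp : ∀ᵐ ω' ∂ν, (ω, t, ω') ∈ X.Comp := by
    rw [ae_iff_measure_eq (X.measurableSet_setOf_mem_comp ω t).nullMeasurableSet, measure_univ]
    simpa [CompE] using h
  have hconc : X.concE ω t = X.conc ω t := funext fun _ => if_neg coe_ne_top
  have := Measure.isProbabilityMeasure_map (μ := ν) (X.aemeasurable_conc hcomp)
  rw [hconc, if_pos coe_lt_top]
  exact X.eIntegral_map_conc hG hcomp (hGu _ this).aemeasurable

end TCSpace

theorem stmt9_general {Ω : Type*} [mΩ : MeasurableSpace Ω] (X : TCSpace Ω)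
    (P : Ω → Set (ProbabilityMeasure Ω))
    (hPdis : X.Disintegrable P)
    (G : Ω → EReal) (hGu : UnivMeasurable G) (hGtail : X.IsTail G)
    (hGint : ∀ ω, ∀ μ ∈ P ω, (∫⁻ x, (G x).posPart ∂(μ : Measure Ω)) < ⊤)
    (v : Ω → EReal) (hv : ∀ ω, v ω = ⨆ μ ∈ P ω, eIntegral (μ : Measure Ω) G)
    (ω : Ω) (τ : Ω → ℝ≥0∞) (hτ : X.toTSpace.IsStoppingTime τ) :
    v ω ≤ ⨆ μ ∈ P ω, eIntegral (μ : Measure Ω)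
        fun ω' => if τ ω' < ⊤ then v (X.toTSpace.Tstop τ ω') else G ω' := by
  rw [hv ω]
  refine iSup₂_mono fun μ hμ => ?_
  obtain ⟨ν, ⟨-, hνP⟩, hcomp, hdis⟩ := hPdis ω μ hμ τ hτ
  set κ : Ω → Measure Ω := fun ω₁ => (ν (X.Tstop τ ω₁) : Measure Ω).map (X.concE ω₁ (τ ω₁))
  change (μ : Measure Ω) = (μ : Measure Ω).bind κ at hdis
  have hκ : AEMeasurable κ μ :=
    Measure.aemeasurable_of_bind_ne_zero (by rw [← hdis]; exact IsProbabilityMeasure.ne_zero _)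
  calc eIntegral (μ : Measure Ω) G = eIntegral ((μ : Measure Ω).bind κ) G := by rw [← hdis]
    _ ≤ _ := by
      refine eIntegral_bind_le hκ (by rw [← hdis]; exact (hGu μ inferInstance).aemeasurable)
        (by rw [← hdis]; exact (hGint ω μ hμ).ne) (hcomp.mono fun ω₁ h => ?_)
      rw [X.eIntegral_map_concE hGu hGtail h]
      split_ifs
      · rw [hv]
        exact le_iSup₂ (f := fun μ' (_ : μ' ∈ P _) => eIntegral (μ' : Measure Ω) G) _ (hνP _)
      · exact le_rfl

/-- (Disintegrable half of the abstract DPP.) If `P` is an analytic and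
disintegrable control correspondence on a Polish TC-space and `G` is a `P`-upper
semi-integrable tail random variable, then for every `ω` and every stopping time `τ`,
`v(ω) ≤ sup_{μ ∈ P(ω)} ∫ (v ∘ T_τ) 1_{τ<∞} + G 1_{τ=∞} dμ`. -/
theorem stmt9 {Ω : Type*} [mΩ : MeasurableSpace Ω] [TopologicalSpace Ω] [PolishSpace Ω]
    [BorelSpace Ω] (X : TCSpace Ω)
    (P : Ω → Set (ProbabilityMeasure Ω)) (hPne : ∀ ω, (P ω).Nonempty)
    (hPan : MeasureTheory.AnalyticSet {p : Ω × ProbabilityMeasure Ω | p.2 ∈ P p.1})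
    (hPdis : X.Disintegrable P)
    (G : Ω → EReal) (hGu : UnivMeasurable G) (hGtail : X.IsTail G)
    (hGint : ∀ ω, ∀ μ ∈ P ω, (∫⁻ x, (G x).posPart ∂(μ : Measure Ω)) < ⊤)
    (v : Ω → EReal) (hv : ∀ ω, v ω = ⨆ μ ∈ P ω, eIntegral (μ : Measure Ω) G)
    (ω : Ω) (τ : Ω → ℝ≥0∞) (hτ : X.toTSpace.IsStoppingTime τ) :
    v ω ≤ ⨆ μ ∈ P ω, eIntegral (μ : Measure Ω)
        fun ω' => if τ ω' < ⊤ then v (X.toTSpace.Tstop τ ω') else G ω' :=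
  stmt9_general (mΩ := mΩ) X P hPdis G hGu hGtail hGint v hv ω τ hτ
end

section
/- Let α : [0,∞) → ℝ be nondecreasing and left-continuous, let α⁺(t) = inf_{u > t} α(u) be its right-continuous modification (which is nondecreasing and right-continuous and thus induces a Lebesgue–Stieltjes measure dα⁺), let γ : [0,∞) → ℝ be continuous, and define the integral ∫₀ᵗ γ dα := 0 for t = 0 and ∫₀ᵗ γ dα := γ(0)·(α⁺(0) − α(0)) + ∫_{(0,t)} γ(u) dα⁺(u) for t > 0. Then for any nondecreasing left-continuous ζ : [0,∞) → ℝ, with ζ⁺(t) = inf_{u > t} ζ(u), the following are equivalent: (1) ζ(t) = ζ(0) + ∫₀ᵗ γ dα for all t ∈ [0,∞); (2) ζ⁺(0) − ζ(0) = γ(0)·(α⁺(0) − α(0)), and for all rationals 0 < r < s and every n ∈ ℕ there exist rationals p, q ∈ (r, s) such that (γ(p) − 1/n)·(α⁺(s) − α⁺(r)) ≤ ζ⁺(s) − ζ⁺(r) ≤ (γ(q) + 1/n)·(α⁺(s) − α⁺(r)). -/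
/-!
Since a monotone left-continuous `ζ` is recovered from `ζ⁺` by left limits, the identity (1)
is equivalent to `ζ⁺ s = ζ 0 + c + ∫_{(0,s]} γ dα⁺` for all `s ≥ 0`, where `c` is the initial
jump. Given (2), on a short rational interval `γ` is nearly constant, so both the increment of
`ζ⁺` and the integral of `γ` are within `ε · Δα⁺` of the same quantity; chaining such intervals
shows that `ζ⁺ - ∫₀ γ dα⁺` is constant on the positive rationals, hence on `[0, ∞)` by
right-continuity. Conversely, the integral over `(r, s]` lies between the extreme values of `γ`
times `Δα⁺`, and these extrema are approximated by values at rational points.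
-/

open MeasureTheory Set Filter Topology Function

/-- The rational sandwich inequalities of condition (2), with `F = α⁺` and `Z = ζ⁺`. -/
def SandwichedOnRatIntervals (γ F Z : ℝ → ℝ) : Prop :=
  ∀ r s : ℚ, 0 < (r : ℝ) → (r : ℝ) < (s : ℝ) → ∀ n : ℕ, 0 < n →
    ∃ p q : ℚ, (r : ℝ) < (p : ℝ) ∧ (p : ℝ) < (s : ℝ) ∧
      (r : ℝ) < (q : ℝ) ∧ (q : ℝ) < (s : ℝ) ∧
      (γ p - 1 / (n : ℝ)) * (F s - F r) ≤ Z s - Z r ∧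
      Z s - Z r ≤ (γ q + 1 / (n : ℝ)) * (F s - F r)

theorem Monotone.tendsto_rightLim_nhdsLT {α β : Type*} [LinearOrder α] [TopologicalSpace α]
    [ConditionallyCompleteLinearOrder β] [TopologicalSpace β] [OrderTopology β] {f : α → β}
    (hf : Monotone f) {t : α} (ht : ContinuousWithinAt f (Iio t) t) :
    Tendsto (rightLim f) (𝓝[<] t) (𝓝 (f t)) :=
  tendsto_of_tendsto_of_tendsto_of_le_of_le' ht tendsto_const_nhds
    (Eventually.of_forall fun _ => hf.le_rightLim le_rfl)
    (eventually_nhdsWithin_of_forall fun _ hq => hf.rightLim_le hq)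

theorem eq_of_continuousWithinAt_Ioi_of_forall_rat {Y : Type*} [TopologicalSpace Y] [T2Space Y]
    {f : ℝ → Y} {s : ℝ} {k : Y}
    (hf : ContinuousWithinAt f (Ioi s) s) (h : ∀ q : ℚ, s < q → f q = k) : f s = k := by
  refine tendsto_nhds_unique_of_frequently_eq hf tendsto_const_nhds ?_
  rw [frequently_iff]
  intro U hU
  obtain ⟨u, hsu, hU⟩ := mem_nhdsGT_iff_exists_Ioo_subset.1 hU
  obtain ⟨q, hsq, hqu⟩ := exists_rat_btwn (show s < u from hsu)
  exact ⟨q, hU ⟨hsq, hqu⟩, h q hsq⟩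

theorem abs_sub_mul_le_of_forall_nat {x c ε A : ℝ}
    (h : ∀ n : ℕ, 0 < n → (c - ε - 1 / n) * A ≤ x ∧ x ≤ (c + ε + 1 / n) * A) :
    |x - c * A| ≤ ε * A := by
  have hlim : Tendsto (fun n : ℕ => (ε + 1 / ((n : ℝ) + 1)) * A) atTop (𝓝 (ε * A)) := by
    simpa using (tendsto_one_div_add_atTop_nhds_zero_nat.const_add ε).mul_const A
  refine ge_of_tendsto' hlim fun n => ?_
  obtain ⟨hlo, hhi⟩ := h (n + 1) n.succ_pos
  push_cast at hlo hhi
  rw [abs_le]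
  constructor <;> nlinarith

theorem eq_of_forall_abs_sub_le_mul_sub {D F : ℚ → ℝ} {u v : ℚ} (huv : u ≤ v)
    (h : ∀ ε : ℝ, 0 < ε → ∃ δ : ℚ, 0 < δ ∧ ∀ a b : ℚ, u ≤ a → a < b → b ≤ v → b - a < δ →
      |D b - D a| ≤ ε * (F b - F a)) :
    D u = D v := by
  have hε : ∀ ε : ℝ, 0 < ε → |D v - D u| ≤ ε * (F v - F u) := by
    intro ε hε
    obtain ⟨δ, hδ, hδ'⟩ := h ε hε
    have chain : ∀ n : ℕ, ∀ a : ℚ, u ≤ a → a ≤ v → v - a < n * (δ / 2) →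
        |D v - D a| ≤ ε * (F v - F a) := by
      intro n
      induction n with
      | zero => intro a _ hav hn; rw [Nat.cast_zero, zero_mul] at hn; linarith
      | succ n ih =>
        intro a hua hav hn
        rcases hav.eq_or_lt with rfl | hav
        · simp
        by_cases hshort : v - a < δ
        · exact hδ' a v hua hav le_rfl hshort
        have hb := ih (a + δ / 2) (by linarith) (by linarith) (by push_cast at hn; linarith)
        have hab := hδ' a (a + δ / 2) hua (by linarith) (by linarith) (by linarith)
        calc |D v - D a| ≤ |D v - D (a + δ / 2)| + |D (a + δ / 2) - D a| := abs_sub_le _ _ _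
          _ ≤ ε * (F v - F (a + δ / 2)) + ε * (F (a + δ / 2) - F a) := add_le_add hb hab
          _ = ε * (F v - F a) := by ring
    obtain ⟨n, hn⟩ := exists_nat_gt ((v - u) / (δ / 2))
    exact chain n u le_rfl huv (by rwa [div_lt_iff₀ (by positivity)] at hn)
  have hlim : Tendsto (fun n : ℕ => 1 / ((n : ℝ) + 1) * (F v - F u)) atTop (𝓝 0) := by
    simpa using tendsto_one_div_add_atTop_nhds_zero_nat.mul_const (F v - F u)
  have := ge_of_tendsto' hlim fun n => hε _ (by positivity)
  exact (sub_eq_zero.1 (abs_nonpos_iff.1 this)).symm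

theorem tendsto_setIntegral_of_tendsto_measure_zero {X E ι : Type*} [TopologicalSpace X]
    [T2Space X] [MeasurableSpace X] [OpensMeasurableSpace X] [NormedAddCommGroup E]
    [NormedSpace ℝ E] {μ : Measure X} [IsFiniteMeasureOnCompacts μ] {f : X → E}
    (hf : Continuous f) {K : Set X} (hK : IsCompact K) {l : Filter ι} {s : ι → Set X}
    (hsK : ∀ᶠ i in l, s i ⊆ K) (hs : Tendsto (fun i => μ (s i)) l (𝓝 0)) :
    Tendsto (fun i => ∫ x in s i, f x ∂μ) l (𝓝 0) := by
  have hK0 : Tendsto ((μ.restrict K) ∘ s) l (𝓝 0) :=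
    tendsto_of_tendsto_of_tendsto_of_le_of_le tendsto_const_nhds hs (fun _ => zero_le)
      fun i => Measure.restrict_apply_le _ _
  refine ((hf.continuousOn.integrableOn_compact hK).tendsto_setIntegral_nhds_zero hK0).congr' ?_
  filter_upwards [hsK] with i hi
  rw [Measure.restrict_restrict_of_subset hi]

theorem setIntegral_Ioo_eq_intervalIntegral_add {μ : Measure ℝ} [IsLocallyFiniteMeasure μ]
    {γ : ℝ → ℝ} (hγ : Continuous γ) {a b c : ℝ} (hab : a ≤ b) (hbc : b < c) :
    ∫ x in Ioo a c, γ x ∂μ = (∫ x in a..b, γ x ∂μ) + ∫ x in Ioo b c, γ x ∂μ := by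
  rw [intervalIntegral.integral_of_le hab, ← Ioc_union_Ioo_eq_Ioo hab hbc,
    setIntegral_union (Ioc_disjoint_Ioc_of_le le_rfl |>.mono_right Ioo_subset_Ioc_self)
      measurableSet_Ioo hγ.integrableOn_Ioc (hγ.integrableOn_Ioc.mono_set Ioo_subset_Ioc_self)]

namespace StieltjesFunction

variable (F : StieltjesFunction ℝ) {γ : ℝ → ℝ}

theorem measureReal_Ioc {a b : ℝ} (hab : a ≤ b) : F.measure.real (Ioc a b) = F b - F a := by
  rw [measureReal_def, measure_Ioc, ENNReal.toReal_ofReal (sub_nonneg.2 (F.mono hab))]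

theorem tendsto_measure_Ioc_nhdsGT (a : ℝ) :
    Tendsto (fun b => F.measure (Ioc a b)) (𝓝[>] a) (𝓝 0) := by
  simp_rw [measure_Ioc, ← ENNReal.ofReal_zero]
  refine ENNReal.tendsto_ofReal ?_
  simpa using ((F.right_continuous a).mono Ioi_subset_Ici_self).tendsto.sub_const (F a)

theorem tendsto_measure_Ioo_nhdsLT (b : ℝ) :
    Tendsto (fun a => F.measure (Ioo a b)) (𝓝[<] b) (𝓝 0) := by
  simp_rw [measure_Ioo, ← ENNReal.ofReal_zero]
  refine ENNReal.tendsto_ofReal ?_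
  simpa using (F.mono.tendsto_leftLim b).const_sub (leftLim F b)

theorem continuousWithinAt_intervalIntegral_Ioi (hγ : Continuous γ) (a b : ℝ) :
    ContinuousWithinAt (fun t => ∫ x in a..t, γ x ∂F.measure) (Ioi b) b := by
  have hsmall : Tendsto (fun t => ∫ x in Ioc b t, γ x ∂F.measure) (𝓝[>] b) (𝓝 0) := by
    refine tendsto_setIntegral_of_tendsto_measure_zero hγ (isCompact_Icc (a := b) (b := b + 1))
      ?_ (F.tendsto_measure_Ioc_nhdsGT b)
    filter_upwards [Ioo_mem_nhdsGT (lt_add_one b)] with t ht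
    exact Ioc_subset_Icc_self.trans (Icc_subset_Icc_right ht.2.le)
  have := (tendsto_const_nhds (x := ∫ x in a..b, γ x ∂F.measure)).add hsmall
  rw [add_zero] at this
  refine this.congr' ?_
  filter_upwards [self_mem_nhdsWithin] with t ht
  rw [← intervalIntegral.integral_of_le (le_of_lt ht),
    intervalIntegral.integral_add_adjacent_intervals (hγ.intervalIntegrable _ _)
      (hγ.intervalIntegrable _ _)]

theorem tendsto_setIntegral_Ioo_nhdsGT (hγ : Continuous γ) {a b : ℝ} (hab : a ≤ b) :
    Tendsto (fun t => ∫ x in Ioo a t, γ x ∂F.measure) (𝓝[>] b)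
      (𝓝 (∫ x in a..b, γ x ∂F.measure)) := by
  have hsmall : Tendsto (fun t => ∫ x in Ioo b t, γ x ∂F.measure) (𝓝[>] b) (𝓝 0) := by
    refine tendsto_setIntegral_of_tendsto_measure_zero hγ (isCompact_Icc (a := b) (b := b + 1))
      ?_ (tendsto_of_tendsto_of_tendsto_of_le_of_le tendsto_const_nhds
        (F.tendsto_measure_Ioc_nhdsGT b) (fun _ => zero_le)
        fun _ => measure_mono Ioo_subset_Ioc_self)
    filter_upwards [Ioo_mem_nhdsGT (lt_add_one b)] with t ht
    exact Ioo_subset_Icc_self.trans (Icc_subset_Icc_right ht.2.le)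
  have := (tendsto_const_nhds (x := ∫ x in a..b, γ x ∂F.measure)).add hsmall
  rw [add_zero] at this
  refine this.congr' ?_
  filter_upwards [self_mem_nhdsWithin] with t ht
  exact (setIntegral_Ioo_eq_intervalIntegral_add hγ hab ht).symm

theorem tendsto_intervalIntegral_nhdsLT (hγ : Continuous γ) {a b : ℝ} (hab : a < b) :
    Tendsto (fun t => ∫ x in a..t, γ x ∂F.measure) (𝓝[<] b)
      (𝓝 (∫ x in Ioo a b, γ x ∂F.measure)) := by
  have hsmall : Tendsto (fun t => ∫ x in Ioo t b, γ x ∂F.measure) (𝓝[<] b) (𝓝 0) := by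
    refine tendsto_setIntegral_of_tendsto_measure_zero hγ (isCompact_Icc (a := b - 1) (b := b))
      ?_ (F.tendsto_measure_Ioo_nhdsLT b)
    filter_upwards [Ioo_mem_nhdsLT (sub_one_lt b)] with t ht
    exact Ioo_subset_Icc_self.trans (Icc_subset_Icc_left ht.1.le)
  have := (tendsto_const_nhds (x := ∫ x in Ioo a b, γ x ∂F.measure)).sub hsmall
  rw [sub_zero] at this
  refine this.congr' ?_
  filter_upwards [Ioo_mem_nhdsLT hab] with t ht
  rw [setIntegral_Ioo_eq_intervalIntegral_add hγ ht.1.le ht.2, add_sub_cancel_right]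

theorem mul_sub_le_intervalIntegral (hγ : Continuous γ) {a b c : ℝ} (hab : a ≤ b)
    (h : ∀ x ∈ Ioc a b, c ≤ γ x) : c * (F b - F a) ≤ ∫ x in a..b, γ x ∂F.measure := by
  rw [intervalIntegral.integral_of_le hab, ← F.measureReal_Ioc hab]
  exact setIntegral_ge_of_const_le_real measurableSet_Ioc
    (by rw [measure_Ioc]; exact ENNReal.ofReal_ne_top) h hγ.integrableOn_Ioc

theorem intervalIntegral_le_mul_sub (hγ : Continuous γ) {a b c : ℝ} (hab : a ≤ b)
    (h : ∀ x ∈ Ioc a b, γ x ≤ c) : ∫ x in a..b, γ x ∂F.measure ≤ c * (F b - F a) := by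
  have := F.mul_sub_le_intervalIntegral hγ.neg hab (c := -c) fun x hx => neg_le_neg (h x hx)
  simp only [Pi.neg_apply, intervalIntegral.integral_neg] at this
  linarith

theorem abs_intervalIntegral_sub_mul_le (hγ : Continuous γ) {a b c ε : ℝ} (hab : a ≤ b)
    (h : ∀ x ∈ Ioc a b, |γ x - c| ≤ ε) :
    |∫ x in a..b, γ x ∂F.measure - c * (F b - F a)| ≤ ε * (F b - F a) := by
  have hlo := F.mul_sub_le_intervalIntegral hγ hab (c := c - ε) fun x hx => by
    linarith [(abs_le.1 (h x hx)).1]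
  have hhi := F.intervalIntegral_le_mul_sub hγ hab (c := c + ε) fun x hx => by
    linarith [(abs_le.1 (h x hx)).2]
  rw [abs_le]
  constructor <;> linarith

theorem exists_rat_mem_Ioo_sub_mul_le_intervalIntegral (hγ : Continuous γ) {r s ε : ℝ}
    (hrs : r < s) (hε : 0 < ε) :
    ∃ p : ℚ, (p : ℝ) ∈ Ioo r s ∧ (γ p - ε) * (F s - F r) ≤ ∫ x in r..s, γ x ∂F.measure := by
  obtain ⟨x, hx, hmin⟩ := isCompact_Icc.exists_isMinOn (nonempty_Icc.2 hrs.le) hγ.continuousOn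
  have hnear : IsOpen {y | γ y < γ x + ε} := isOpen_lt hγ continuous_const
  obtain ⟨y, hyγ, hy⟩ := mem_closure_iff.1 (closure_Ioo hrs.ne ▸ hx : x ∈ closure (Ioo r s))
    _ hnear (by simpa using hε)
  obtain ⟨p, hp, hpγ⟩ := Rat.denseRange_cast.exists_mem_open (isOpen_Ioo.inter hnear) ⟨y, hy, hyγ⟩
  have hpγ : γ p < γ x + ε := hpγ
  refine ⟨p, hp, le_trans ?_ (F.mul_sub_le_intervalIntegral hγ hrs.le fun z hz =>
    hmin ⟨hz.1.le, hz.2⟩)⟩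
  exact mul_le_mul_of_nonneg_right (by linarith) (sub_nonneg.2 (F.mono hrs.le))

theorem exists_rat_mem_Ioo_intervalIntegral_le_add_mul (hγ : Continuous γ) {r s ε : ℝ}
    (hrs : r < s) (hε : 0 < ε) :
    ∃ q : ℚ, (q : ℝ) ∈ Ioo r s ∧ ∫ x in r..s, γ x ∂F.measure ≤ (γ q + ε) * (F s - F r) := by
  obtain ⟨q, hq, h⟩ := F.exists_rat_mem_Ioo_sub_mul_le_intervalIntegral hγ.neg hrs hε
  simp only [Pi.neg_apply, intervalIntegral.integral_neg] at h
  exact ⟨q, hq, by linarith⟩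

end StieltjesFunction

section Sandwich

variable {γ : ℝ → ℝ} {F Z : StieltjesFunction ℝ}

theorem sandwichedOnRatIntervals_of_eq_add_intervalIntegral (hγ : Continuous γ) {k : ℝ}
    (h : ∀ s : ℝ, 0 ≤ s → Z s = k + ∫ x in (0 : ℝ)..s, γ x ∂F.measure) :
    SandwichedOnRatIntervals γ F Z := by
  intro r s hr hrs n hn
  have hZ : Z s - Z r = ∫ x in (r : ℝ)..s, γ x ∂F.measure := by
    rw [h s (hr.trans hrs).le, h r hr.le, add_sub_add_left_eq_sub,
      intervalIntegral.integral_interval_sub_left (hγ.intervalIntegrable _ _)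
        (hγ.intervalIntegrable _ _)]
  have hn' : (0 : ℝ) < 1 / n := by positivity
  obtain ⟨p, hp, hpI⟩ := F.exists_rat_mem_Ioo_sub_mul_le_intervalIntegral hγ hrs hn'
  obtain ⟨q, hq, hqI⟩ := F.exists_rat_mem_Ioo_intervalIntegral_le_add_mul hγ hrs hn'
  exact ⟨p, q, hp.1, hp.2, hq.1, hq.2, hZ ▸ hpI, hZ ▸ hqI⟩

theorem abs_sub_intervalIntegral_le_of_sandwiched (hγ : Continuous γ)
    (hZF : SandwichedOnRatIntervals γ F Z) {a b : ℚ} (ha : 0 < (a : ℝ)) (hab : (a : ℝ) < b)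
    {c ε : ℝ} (hc : ∀ x ∈ Icc (a : ℝ) b, |γ x - c| ≤ ε) :
    |(Z b - Z a) - ∫ x in (a : ℝ)..b, γ x ∂F.measure| ≤ 2 * ε * (F b - F a) := by
  have hZ : |(Z b - Z a) - c * (F b - F a)| ≤ ε * (F b - F a) := by
    refine abs_sub_mul_le_of_forall_nat fun n hn => ?_
    obtain ⟨p, q, hap, hpb, haq, hqb, hp, hq⟩ := hZF a b ha hab n hn
    have hΔ : 0 ≤ F b - F a := sub_nonneg.2 (F.mono hab.le)
    have hγp := (abs_le.1 (hc p ⟨hap.le, hpb.le⟩)).1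
    have hγq := (abs_le.1 (hc q ⟨haq.le, hqb.le⟩)).2
    constructor <;> nlinarith
  have hI := F.abs_intervalIntegral_sub_mul_le hγ hab.le fun x hx => hc x (Ioc_subset_Icc_self hx)
  calc |(Z b - Z a) - ∫ x in (a : ℝ)..b, γ x ∂F.measure|
      ≤ |(Z b - Z a) - c * (F b - F a)| + |c * (F b - F a) - ∫ x in (a : ℝ)..b, γ x ∂F.measure| :=
        abs_sub_le _ _ _
    _ ≤ 2 * ε * (F b - F a) := by rw [abs_sub_comm (c * _)]; linarith

theorem sub_intervalIntegral_eq_of_sandwiched (hγ : Continuous γ)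
    (hZF : SandwichedOnRatIntervals γ F Z) {u v : ℚ} (hu : 0 < (u : ℝ)) (huv : u ≤ v) :
    Z u - ∫ x in (0 : ℝ)..u, γ x ∂F.measure = Z v - ∫ x in (0 : ℝ)..v, γ x ∂F.measure := by
  refine eq_of_forall_abs_sub_le_mul_sub (D := fun q : ℚ => Z q - ∫ x in (0 : ℝ)..q, γ x ∂F.measure)
    (F := fun q : ℚ => F q) huv fun ε hε => ?_
  obtain ⟨δ, hδ, hγδ⟩ := Metric.uniformContinuousOn_iff.1
    ((isCompact_Icc (a := (u : ℝ)) (b := v)).uniformContinuousOn_of_continuous hγ.continuousOn)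
    (ε / 2) (by positivity)
  obtain ⟨δ', hδ'0, hδ'δ⟩ := exists_rat_btwn hδ
  refine ⟨δ', by exact_mod_cast hδ'0, fun a b hua hab hbv hba => ?_⟩
  have hua : (u : ℝ) ≤ a := by exact_mod_cast hua
  have hab : (a : ℝ) < b := by exact_mod_cast hab
  have hbv : (b : ℝ) ≤ v := by exact_mod_cast hbv
  have hba : (b : ℝ) - a < δ := by
    calc (b : ℝ) - a = ((b - a : ℚ) : ℝ) := by push_cast; ring
      _ < δ' := by exact_mod_cast hba
      _ < δ := hδ'δ
  have hosc : ∀ x ∈ Icc (a : ℝ) b, |γ x - γ a| ≤ ε / 2 := fun x hx =>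
    (hγδ x ⟨hua.trans hx.1, hx.2.trans hbv⟩ a ⟨hua, hab.le.trans hbv⟩
      ((Real.dist_le_of_mem_Icc hx (left_mem_Icc.2 hab.le)).trans_lt hba)).le
  have hest := abs_sub_intervalIntegral_le_of_sandwiched hγ hZF (hu.trans_le hua) hab hosc
  have hsplit := intervalIntegral.integral_interval_sub_left (μ := F.measure)
    (hγ.intervalIntegrable 0 b) (hγ.intervalIntegrable 0 a)
  calc |(Z b - ∫ x in (0 : ℝ)..b, γ x ∂F.measure) - (Z a - ∫ x in (0 : ℝ)..a, γ x ∂F.measure)|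
      = |(Z b - Z a) - ∫ x in (a : ℝ)..b, γ x ∂F.measure| := by rw [← hsplit]; congr 1; ring
    _ ≤ ε * (F b - F a) := by linarith

theorem eq_add_intervalIntegral_of_sandwiched (hγ : Continuous γ)
    (hZF : SandwichedOnRatIntervals γ F Z) {s : ℝ} (hs : 0 ≤ s) :
    Z s = Z 0 + ∫ x in (0 : ℝ)..s, γ x ∂F.measure := by
  set D := fun t => Z t - ∫ x in (0 : ℝ)..t, γ x ∂F.measure
  have hD : ∀ t, ContinuousWithinAt D (Ioi t) t := fun t =>
    ((Z.right_continuous t).mono Ioi_subset_Ici_self).sub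
      (F.continuousWithinAt_intervalIntegral_Ioi hγ 0 t)
  have hD1 : ∀ q : ℚ, 0 < (q : ℝ) → D q = D 1 := by
    intro q hq
    rcases le_total q 1 with hq1 | hq1
    · simpa [D] using sub_intervalIntegral_eq_of_sandwiched hγ hZF hq hq1
    · simpa [D] using (sub_intervalIntegral_eq_of_sandwiched hγ hZF (by simp) hq1).symm
  have hD0 : D 0 = D 1 := eq_of_continuousWithinAt_Ioi_of_forall_rat (hD 0) hD1
  have hDs : D s = D 1 :=
    eq_of_continuousWithinAt_Ioi_of_forall_rat (hD s) fun q hq => hD1 q (hs.trans_lt hq)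
  have : D s = D 0 := hDs.trans hD0.symm
  simp only [D, intervalIntegral.integral_same, sub_zero] at this
  linarith

theorem forall_eq_add_intervalIntegral_iff (hγ : Continuous γ) (k : ℝ) :
    (∀ s : ℝ, 0 ≤ s → Z s = k + ∫ x in (0 : ℝ)..s, γ x ∂F.measure) ↔
      Z 0 = k ∧ SandwichedOnRatIntervals γ F Z := by
  refine ⟨fun h => ⟨by simpa using h 0 le_rfl,
    sandwichedOnRatIntervals_of_eq_add_intervalIntegral hγ h⟩, ?_⟩
  rintro ⟨rfl, hZF⟩ s hs
  exact eq_add_intervalIntegral_of_sandwiched hγ hZF hs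

end Sandwich

theorem forall_eq_add_setIntegral_Ioo_iff {ζ γ : ℝ → ℝ} (hζ : Monotone ζ)
    (hζl : ∀ t : ℝ, 0 < t → ContinuousWithinAt ζ (Iio t) t) (hγ : Continuous γ)
    {F : StieltjesFunction ℝ} {c : ℝ} :
    (∀ t : ℝ, 0 ≤ t →
        ζ t = ζ 0 + (if t = 0 then 0 else c + ∫ u in Ioo (0 : ℝ) t, γ u ∂F.measure)) ↔
      ∀ s : ℝ, 0 ≤ s → rightLim ζ s = ζ 0 + c + ∫ x in (0 : ℝ)..s, γ x ∂F.measure := by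
  constructor
  · intro h s hs
    refine rightLim_eq_of_tendsto
      (((F.tendsto_setIntegral_Ioo_nhdsGT hγ hs).const_add (ζ 0 + c)).congr' ?_)
    filter_upwards [self_mem_nhdsWithin] with t ht
    rw [h t (hs.trans ht.le), if_neg (hs.trans_lt ht).ne', add_assoc]
  · intro h t ht
    rcases ht.eq_or_lt with rfl | ht
    · simp
    rw [if_neg ht.ne', ← add_assoc]
    refine tendsto_nhds_unique (hζ.tendsto_rightLim_nhdsLT (hζl t ht))
      (((F.tendsto_intervalIntegral_nhdsLT hγ ht).const_add (ζ 0 + c)).congr' ?_)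
    filter_upwards [Ioo_mem_nhdsLT ht] with s hs
    exact (h s hs.1.le).symm

theorem stmt19_general (α ζ γ : ℝ → ℝ) (hα : Monotone α)
    (hζ : Monotone ζ)
    (hζl : ∀ t : ℝ, 0 < t → ContinuousWithinAt ζ (Set.Iio t) t)
    (hγ : Continuous γ) :
    (∀ t : ℝ, 0 ≤ t →
        ζ t = ζ 0 + (if t = 0 then 0 else
          γ 0 * (rightLim α 0 - α 0) +
            ∫ u in Set.Ioo (0 : ℝ) t, γ u ∂hα.stieltjesFunction.measure)) ↔
      (rightLim ζ 0 - ζ 0 = γ 0 * (rightLim α 0 - α 0) ∧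
        ∀ r s : ℚ, 0 < (r : ℝ) → (r : ℝ) < (s : ℝ) → ∀ n : ℕ, 0 < n →
          ∃ p q : ℚ, (r : ℝ) < (p : ℝ) ∧ (p : ℝ) < (s : ℝ) ∧
            (r : ℝ) < (q : ℝ) ∧ (q : ℝ) < (s : ℝ) ∧
            (γ p - 1 / (n : ℝ)) * (rightLim α s - rightLim α r) ≤
              rightLim ζ s - rightLim ζ r ∧
            rightLim ζ s - rightLim ζ r ≤
              (γ q + 1 / (n : ℝ)) * (rightLim α s - rightLim α r)) := by
  rw [forall_eq_add_setIntegral_Ioo_iff hζ hζl hγ, sub_eq_iff_eq_add']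
  exact forall_eq_add_intervalIntegral_iff (F := hα.stieltjesFunction)
    (Z := hζ.stieltjesFunction) hγ _

/-- Characterization of the left-continuous Stieltjes integral
`ζ = ζ(0) + ∫₀^· γ dα` (with `α` nondecreasing and left-continuous, `γ` continuous) via the
initial jump condition and rational sandwich inequalities for the right-continuous
modifications `α⁺ = rightLim α` and `ζ⁺ = rightLim ζ`. -/
theorem stmt19 (α ζ γ : ℝ → ℝ) (hα : Monotone α)
    (hαl : ∀ t : ℝ, 0 < t → ContinuousWithinAt α (Set.Iio t) t)
    (hζ : Monotone ζ)
    (hζl : ∀ t : ℝ, 0 < t → ContinuousWithinAt ζ (Set.Iio t) t)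
    (hγ : Continuous γ) :
    (∀ t : ℝ, 0 ≤ t →
        ζ t = ζ 0 + (if t = 0 then 0 else
          γ 0 * (rightLim α 0 - α 0) +
            ∫ u in Set.Ioo (0 : ℝ) t, γ u ∂hα.stieltjesFunction.measure)) ↔
      (rightLim ζ 0 - ζ 0 = γ 0 * (rightLim α 0 - α 0) ∧
        ∀ r s : ℚ, 0 < (r : ℝ) → (r : ℝ) < (s : ℝ) → ∀ n : ℕ, 0 < n →
          ∃ p q : ℚ, (r : ℝ) < (p : ℝ) ∧ (p : ℝ) < (s : ℝ) ∧
            (r : ℝ) < (q : ℝ) ∧ (q : ℝ) < (s : ℝ) ∧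
            (γ p - 1 / (n : ℝ)) * (rightLim α s - rightLim α r) ≤
              rightLim ζ s - rightLim ζ r ∧
            rightLim ζ s - rightLim ζ r ≤
              (γ q + 1 / (n : ℝ)) * (rightLim α s - rightLim α r)) :=
  stmt19_general α ζ γ hα hζ hζl hγ
end
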